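/- The triangle graph T(G) of a graph G contains an induced 4-cycle if and only if G contains a (not necessarily induced) subgraph isomorphic to the wheel W_4 = K_1 ∨ C_4. -/

import Mathlib

open SimpleGraph

/-- A triangle in a graph: a 3-element vertex set, pairwise adjacent. -/
def IsTriangle {V : Type*} (G : SimpleGraph V) (t : Finset V) : Prop :=
  t.card = 3 ∧ ∀ u ∈ t, ∀ v ∈ t, u ≠ v → G.Adj u v

/-- The triangle graph: vertices are the triangles of `G`, two triangles are
adjacent iff they share an edge (equivalently, share exactly two vertices). -/
def triangleGraph {V : Type*} [DecidableEq V] (G : SimpleGraph V) :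
    SimpleGraph {t : Finset V // IsTriangle G t} where
  Adj s t := s ≠ t ∧ ((s : Finset V) ∩ (t : Finset V)).card = 2
  symm := ⟨by
    intro s t h
    exact ⟨h.1.symm, by rw [Finset.inter_comm]; exact h.2⟩⟩
  loopless := ⟨fun s h => h.1 rfl⟩

/-- `K₅` minus the edges of a triangle (on vertices 0,1,2). -/
def K5mK3 : SimpleGraph (Fin 5) where
  Adj u v := u ≠ v ∧ ¬(u.val < 3 ∧ v.val < 3)
  symm := ⟨by
    intro u v h
    exact ⟨h.1.symm, fun hc => h.2 ⟨hc.2, hc.1⟩⟩⟩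
  loopless := ⟨fun u h => h.1 rfl⟩

/-- The wheel `Wₙ = K₁ ∨ Cₙ`; the hub is `none`. -/
def wheel (n : ℕ) : SimpleGraph (Option (Fin n)) :=
  SimpleGraph.fromRel (fun u v =>
    u = none ∨ ∃ a b, u = some a ∧ v = some b ∧ (cycleGraph n).Adj a b)

/-- The square of a graph: join vertices at distance at most 2. -/
def squareGraph {V : Type*} (G : SimpleGraph V) : SimpleGraph V where
  Adj u v := u ≠ v ∧ (G.Adj u v ∨ ∃ w, G.Adj u w ∧ G.Adj w v)
  symm := ⟨by
    intro u v h
    refine ⟨h.1.symm, ?_⟩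
    rcases h.2 with h' | ⟨w, h1, h2⟩
    · exact Or.inl h'.symm
    · exact Or.inr ⟨w, h2.symm, h1.symm⟩⟩
  loopless := ⟨fun u h => h.1 rfl⟩

/-- The number of triangles of `G` containing both `u` and `v`. -/
noncomputable def triCount {V : Type*} (G : SimpleGraph V) (u v : V) : ℕ :=
  {t : Finset V | IsTriangle G t ∧ u ∈ t ∧ v ∈ t}.ncard

/-- `G` contains a (not necessarily induced) subgraph isomorphic to `H`. -/
def HasSubgraphIso {α V : Type*} (H : SimpleGraph α) (G : SimpleGraph V) : Prop :=
  ∃ f : H →g G, Function.Injective f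

/-!
Let `T₀ T₁ T₂ T₃` be an induced 4-cycle of triangles: consecutive triangles share an edge,
opposite ones at most a vertex. The edges `T₀ ∩ T₁` and `T₁ ∩ T₂` of `T₁` meet, so some vertex
lies in `T₀, T₁, T₂`, and likewise some vertex lies in `T₂, T₃, T₀`; both lie in `T₀ ∩ T₂`, so
they coincide in a hub `c` common to all four triangles. The other endpoints `uᵢ` of the shared
edges `Tᵢ ∩ Tᵢ₊₁` are distinct, since for `i ≠ j` some triangle through `uᵢ` is opposite to one
through `uⱼ`, and `c` with the rim `u₀ u₁ u₂ u₃` is a `W₄`. Conversely the triangles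
`{c, uᵢ, uᵢ₊₁}` of a `W₄` share `c` together with one rim vertex when consecutive and only `c`
when opposite.
-/

open Finset

section Triangles

variable {V : Type*} {G : SimpleGraph V}

theorem isTriangle_iff_isNClique {t : Finset V} : IsTriangle G t ↔ G.IsNClique 3 t :=
  ⟨fun ⟨h3, h⟩ => ⟨fun _ hu _ hv huv => h _ hu _ hv huv, h3⟩,
    fun h => ⟨h.card_eq, fun _ hu _ hv => h.isClique hu hv⟩⟩

theorem triangleGraph_card_inter_le_one_of_not_adj [DecidableEq V]
    {s t : {t : Finset V // IsTriangle G t}} (hne : s ≠ t) (hst : ¬(triangleGraph G).Adj s t) :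
    (s.1 ∩ t.1).card ≤ 1 := by
  have hsub : ¬s.1 ⊆ t.1 := fun h =>
    hne (Subtype.ext (eq_of_subset_of_card_le h (by rw [s.2.1, t.2.1])))
  have hlt : (s.1 ∩ t.1).card < 3 := s.2.1 ▸ card_lt_card (by simpa [ssubset_iff_subset_ne])
  have h2 : (s.1 ∩ t.1).card ≠ 2 := fun h => hst ⟨hne, h⟩
  omega

end Triangles

theorem hasSubgraphIso_wheel_iff {V : Type*} {n : ℕ} (G : SimpleGraph V) :
    HasSubgraphIso (wheel n) G ↔ ∃ (c : V) (u : Fin n → V), Function.Injective u ∧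
      (∀ i, u i ≠ c) ∧ (∀ i, G.Adj c (u i)) ∧
      ∀ a b, (cycleGraph n).Adj a b → G.Adj (u a) (u b) := by
  constructor
  · rintro ⟨f, hf⟩
    refine ⟨f none, f ∘ some, hf.comp (Option.some_injective _),
      fun i h => Option.some_ne_none i (hf h), fun i => f.map_adj ?_,
      fun a b hab => f.map_adj ?_⟩
    · simp [wheel]
    · simp [wheel, hab, hab.ne]
  · rintro ⟨c, u, hu, huc, hc, hcyc⟩
    refine ⟨⟨fun o => o.elim c u, ?_⟩, ?_⟩
    · rintro (_ | a) (_ | b) ⟨hne, h⟩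
      · exact absurd rfl hne
      · exact hc b
      · exact (hc a).symm
      · rcases h with (h | ⟨_, _, ⟨⟩, ⟨⟩, hab⟩) | (h | ⟨_, _, ⟨⟩, ⟨⟩, hab⟩)
        exacts [absurd h (Option.some_ne_none a), hcyc a b hab,
          absurd h (Option.some_ne_none b), (hcyc b a hab).symm]
    · rintro (_ | a) (_ | b) h
      · rfl
      · exact absurd h.symm (huc b)
      · exact absurd h (huc a)
      · exact congrArg some (hu h)

theorem cycleGraph_four_adj_iff (a b : Fin 4) :
    (cycleGraph 4).Adj a b ↔ b = a + 1 ∨ a = b + 1 := by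
  revert a b; decide

theorem card_pair_inter_pair_eq_one_iff (i j : Fin 4) :
    ({i, i + 1} ∩ {j, j + 1} : Finset (Fin 4)).card = 1 ↔ (cycleGraph 4).Adj i j := by
  revert i j; decide

theorem card_pair_inter_pair_eq_two_iff (i j : Fin 4) :
    ({i, i + 1} ∩ {j, j + 1} : Finset (Fin 4)).card = 2 ↔ i = j := by
  revert i j; decide

theorem exists_add_two_mem_pair_of_ne {i j : Fin 4} (h : i ≠ j) :
    ∃ a ∈ ({i, i + 1} : Finset (Fin 4)), a + 2 ∈ ({j, j + 1} : Finset (Fin 4)) := by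
  revert i j; decide

theorem card_insert_image_inter_insert_image {α ι : Type*} [DecidableEq α] [DecidableEq ι]
    {c : α} {u : ι → α} (hu : Function.Injective u) (huc : ∀ i, u i ≠ c) (s t : Finset ι) :
    (insert c (s.image u) ∩ insert c (t.image u)).card = (s ∩ t).card + 1 := by
  rw [← insert_inter_distrib, ← image_inter _ _ hu, card_insert_of_notMem,
    card_image_of_injective _ hu]
  simpa using fun i _ _ => huc i

theorem hasSubgraphIso_wheel_four_iff {V : Type*} (G : SimpleGraph V) :
    HasSubgraphIso (wheel 4) G ↔ ∃ (c : V) (u : Fin 4 → V), Function.Injective u ∧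
      (∀ i, u i ≠ c) ∧ (∀ i, G.Adj c (u i)) ∧ ∀ i, G.Adj (u i) (u (i + 1)) := by
  rw [hasSubgraphIso_wheel_iff]
  refine exists₂_congr fun c u => and_congr_right' <| and_congr_right' <| and_congr_right' ?_
  refine ⟨fun h i => h i (i + 1) ((cycleGraph_four_adj_iff _ _).mpr (Or.inl rfl)),
    fun h a b hab => ?_⟩
  rcases (cycleGraph_four_adj_iff a b).mp hab with rfl | rfl
  exacts [h a, (h b).symm]

theorem exists_hub_of_card_inter {V : Type*} [DecidableEq V] {T : Fin 4 → Finset V}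
    (hcard : ∀ i, (T i).card = 3) (hadj : ∀ i, (T i ∩ T (i + 1)).card = 2)
    (hopp : ∀ i, (T i ∩ T (i + 2)).card ≤ 1) :
    ∃ (c : V) (u : Fin 4 → V), Function.Injective u ∧ (∀ i, u i ≠ c) ∧ (∀ i, c ∈ T i) ∧
      ∀ i, u i ∈ T i ∧ u i ∈ T (i + 1) := by
  have hthree : ∀ i, ∃ c, c ∈ T i ∧ c ∈ T (i + 1) ∧ c ∈ T (i + 2) := by
    intro i
    have h : (T (i + 1) ∩ T (i + 2)).card = 2 := by
      rw [show i + 2 = i + 1 + 1 by rw [add_assoc]; rfl]; exact hadj (i + 1)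
    obtain ⟨c, hc⟩ := inter_nonempty_of_card_lt_card_add_card inter_subset_right inter_subset_left
      (by rw [hcard, hadj, h]; norm_num)
    simp only [mem_inter] at hc
    exact ⟨c, hc.1.1, hc.1.2, hc.2.2⟩
  have hsep : ∀ i, ∀ x ∈ T i, x ∈ T (i + 2) → ∀ y ∈ T i, y ∈ T (i + 2) → x = y :=
    fun i _ hx hx' _ hy hy' =>
      card_le_one_iff.mp (hopp i) (mem_inter.mpr ⟨hx, hx'⟩) (mem_inter.mpr ⟨hy, hy'⟩)
  obtain ⟨c, h0, h1, h2⟩ := hthree 0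
  obtain ⟨c', h2', h3', h0'⟩ := hthree 2
  obtain rfl : c = c' := hsep 0 c h0 h2 c' h0' h2'
  have hub : ∀ i, c ∈ T i := by intro i; fin_cases i <;> assumption
  choose u hu huc using fun i => exists_mem_ne ((hadj i).symm ▸ one_lt_two) c
  have hmem : ∀ i, ∀ a ∈ ({i, i + 1} : Finset (Fin 4)), u i ∈ T a := by
    intro i a ha
    simp only [mem_insert, mem_singleton] at ha
    rcases ha with rfl | rfl
    exacts [(mem_inter.mp (hu a)).1, (mem_inter.mp (hu i)).2]
  refine ⟨c, u, fun i j hij => ?_, huc, hub, fun i => mem_inter.mp (hu i)⟩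
  by_contra hne
  obtain ⟨a, ha, ha2⟩ := exists_add_two_mem_pair_of_ne hne
  exact huc i (hsep a _ (hmem i a ha) (hij ▸ hmem j _ ha2) c (hub a) (hub (a + 2)))

section TriangleGraph

variable {V : Type*} [DecidableEq V] {G : SimpleGraph V}

theorem hasSubgraphIso_wheel_four_of_embedding (e : cycleGraph 4 ↪g triangleGraph G) :
    HasSubgraphIso (wheel 4) G := by
  have hadj : ∀ i, ((e i).1 ∩ (e (i + 1)).1).card = 2 := fun i =>
    (e.map_adj_iff.mpr ((cycleGraph_four_adj_iff _ _).mpr (Or.inl rfl))).2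
  have hopp : ∀ i, ((e i).1 ∩ (e (i + 2)).1).card ≤ 1 := fun i =>
    triangleGraph_card_inter_le_one_of_not_adj (e.injective.ne (by revert i; decide))
      (e.map_adj_iff.not.mpr (by revert i; decide))
  obtain ⟨c, u, hu, huc, hub, hrim⟩ := exists_hub_of_card_inter (fun i => (e i).2.1) hadj hopp
  exact (hasSubgraphIso_wheel_four_iff G).mpr ⟨c, u, hu, huc,
    fun i => (e i).2.2 c (hub i) (u i) (hrim i).1 (huc i).symm,
    fun i => (e (i + 1)).2.2 _ (hrim i).2 _ (hrim (i + 1)).1 (hu.ne (by revert i; decide))⟩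

theorem nonempty_embedding_triangleGraph_of_hasSubgraphIso_wheel_four
    (h : HasSubgraphIso (wheel 4) G) : Nonempty (cycleGraph 4 ↪g triangleGraph G) := by
  obtain ⟨c, u, hu, huc, hc, hcyc⟩ := (hasSubgraphIso_wheel_four_iff G).mp h
  set T : Fin 4 → Finset V := fun i => insert c (({i, i + 1} : Finset (Fin 4)).image u)
  have hinter : ∀ i j, (T i ∩ T j).card = ({i, i + 1} ∩ {j, j + 1} : Finset (Fin 4)).card + 1 :=
    fun i j => card_insert_image_inter_insert_image hu huc _ _
  have htri : ∀ i, IsTriangle G (T i) := fun i => by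
    rw [isTriangle_iff_isNClique]
    simpa [T, image_insert] using is3Clique_triple_iff.mpr ⟨hc i, hc (i + 1), hcyc i⟩
  have hinj : Function.Injective T := fun i j h => by
    have hij := hinter i j
    have hjj := hinter j j
    rw [h] at hij
    have := (card_pair_inter_pair_eq_two_iff j j).mpr rfl
    exact (card_pair_inter_pair_eq_two_iff i j).mp (by omega)
  refine ⟨⟨⟨fun i => ⟨T i, htri i⟩, fun i j h => hinj (congrArg Subtype.val h)⟩, fun {i j} => ?_⟩⟩
  change (_ ≠ _ ∧ (T i ∩ T j).card = 2) ↔ _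
  rw [hinter, ← card_pair_inter_pair_eq_one_iff]
  refine ⟨fun h => by omega, fun h => ⟨fun hT => ?_, by omega⟩⟩
  rw [hinj (congrArg Subtype.val hT), (card_pair_inter_pair_eq_two_iff j j).mpr rfl] at h
  omega

end TriangleGraph

theorem triangleGraph_C4_iff_general {V : Type*} [DecidableEq V]
    (G : SimpleGraph V) :
    Nonempty (cycleGraph 4 ↪g triangleGraph G) ↔ HasSubgraphIso (wheel 4) G :=
  ⟨fun ⟨e⟩ => hasSubgraphIso_wheel_four_of_embedding e,
    nonempty_embedding_triangleGraph_of_hasSubgraphIso_wheel_four⟩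

/-- `T(G)` contains an induced 4-cycle iff `G` contains a subgraph isomorphic to
the wheel `W₄`. -/
theorem triangleGraph_C4_iff {V : Type*} [Fintype V] [DecidableEq V]
    (G : SimpleGraph V) :
    Nonempty (cycleGraph 4 ↪g triangleGraph G) ↔ HasSubgraphIso (wheel 4) G :=
  triangleGraph_C4_iff_general G
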